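/- arXiv:2305.18625 — 5 statements merged into one kernel-verified Lean document; each statement's English description precedes it below -/
import Mathlib

section
/- Let q ≥ 2 and let H ≤ (ℤ/qℤ)^× be a subgroup. Then Σ_{a₁, a₂ ∈ H} gcd(a₁ − a₂, q)^{1/2} ≪_ε |H|^{3/2} · q^{1/2 + ε} for every ε > 0, where a₁ − a₂ is computed in ℤ/qℤ and gcd(x, q) means the gcd of any integer representative of x with q. -/
/-!
Fix `a₁ ∈ H` and sort the `a₂ ∈ H` by the divisor `d = gcd(a₁ - a₂, q)`. The `a₂` with a given
`d` lie in one residue class modulo `d`, so there are at most `N ≤ min(|H|, q/d)` of them, and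
they contribute `N √d ≤ √(N · N d) ≤ √|H| √q`. Summing over the `≪ q^ε` divisors `d` of `q` and
then over `a₁` gives the bound. The divisor bound itself comes from `τ(n) = ∏ (aₚ + 1)`, where
`aₚ + 1 ≤ p^{aₚ ε}` as soon as `p^ε ≥ 2`, and the finitely many smaller primes cost a constant.
-/

open Finset Real

section DivisorBound

lemma add_one_le_rpow_natCast_mul {x ε : ℝ} (hx : 0 ≤ x) (h2 : 2 ≤ x ^ ε) (a : ℕ) :
    (a + 1 : ℝ) ≤ x ^ (a * ε) := by
  rw [mul_comm, rpow_mul hx, rpow_natCast]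
  calc (a + 1 : ℝ) ≤ 2 ^ a := by exact_mod_cast Nat.lt_two_pow_self
    _ ≤ (x ^ ε) ^ a := pow_le_pow_left₀ zero_le_two h2 a

lemma add_one_le_mul_two_rpow {ε : ℝ} (hε : 0 < ε) (a : ℕ) :
    (a + 1 : ℝ) ≤ (1 + 1 / (ε * log 2)) * 2 ^ (a * ε) := by
  have hc : 0 < ε * log 2 := mul_pos hε (log_pos one_lt_two)
  have hexp : 1 + a * ε * log 2 ≤ (2 : ℝ) ^ (a * ε) := by
    rw [rpow_def_of_pos two_pos]
    linarith [add_one_le_exp (log 2 * (a * ε))]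
  calc (a + 1 : ℝ) ≤ (1 + 1 / (ε * log 2)) * (1 + a * ε * log 2) := by
        have : 1 / (ε * log 2) * (a * ε * log 2) = a := by field_simp
        nlinarith [div_pos one_pos hc, Nat.cast_nonneg (α := ℝ) a]
    _ ≤ (1 + 1 / (ε * log 2)) * 2 ^ (a * ε) := by gcongr

lemma prod_primeFactors_rpow_factorization_mul {n : ℕ} (hn : n ≠ 0) (ε : ℝ) :
    ∏ p ∈ n.primeFactors, (p : ℝ) ^ (n.factorization p * ε) = (n : ℝ) ^ ε := by
  simp_rw [rpow_natCast_mul (Nat.cast_nonneg _)]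
  rw [finsetProd_rpow _ _ (fun _ _ => by positivity)]
  exact_mod_cast congrArg (fun m : ℕ => (m : ℝ) ^ ε)
    (Nat.prod_primeFactors_pow_factorization hn).symm

theorem card_divisors_le_mul_rpow {ε : ℝ} (hε : 0 < ε) :
    ∃ C : ℝ, 0 < C ∧ ∀ n : ℕ, n ≠ 0 → (#n.divisors : ℝ) ≤ C * (n : ℝ) ^ ε := by
  set K : ℝ := 1 + 1 / (ε * log 2)
  have hK : 1 ≤ K := le_add_of_nonneg_right (by have := log_pos one_lt_two; positivity)
  set B := ⌈(2 : ℝ) ^ (1 / ε)⌉₊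
  refine ⟨K ^ (B + 1), by positivity, fun n hn => ?_⟩
  -- only the primes `p ≤ B` can have `p ^ ε < 2`
  have hlocal : ∀ p ∈ n.primeFactors, (n.factorization p + 1 : ℝ) ≤
      (if p ≤ B then K else 1) * (p : ℝ) ^ (n.factorization p * ε) := by
    intro p hp
    have hp2 : (2 : ℝ) ≤ p := by exact_mod_cast (Nat.prime_of_mem_primeFactors hp).two_le
    split_ifs with hpB
    · refine (add_one_le_mul_two_rpow hε _).trans ?_
      gcongr
    · rw [one_mul]
      refine add_one_le_rpow_natCast_mul (by positivity) ?_ _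
      calc (2 : ℝ) = ((2 : ℝ) ^ (1 / ε)) ^ ε := by
            rw [← rpow_mul zero_le_two, one_div_mul_cancel hε.ne', rpow_one]
        _ ≤ (p : ℝ) ^ ε := by
            gcongr
            exact (Nat.le_ceil _).trans (by exact_mod_cast (not_le.1 hpB).le)
  have hsmall : ∏ p ∈ n.primeFactors, (if p ≤ B then K else 1) ≤ K ^ (B + 1) := by
    rw [prod_ite, prod_const, prod_const, one_pow, mul_one, ← Nat.card_Iic B]
    exact pow_le_pow_right₀ hK (card_le_card fun p hp => mem_Iic.2 (mem_filter.1 hp).2)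
  rw [Nat.card_divisors hn, Nat.cast_prod, ← prod_primeFactors_rpow_factorization_mul hn]
  push_cast
  calc ∏ p ∈ n.primeFactors, (n.factorization p + 1 : ℝ)
      ≤ ∏ p ∈ n.primeFactors, (if p ≤ B then K else 1) * (p : ℝ) ^ (n.factorization p * ε) :=
        prod_le_prod (fun _ _ => by positivity) hlocal
    _ ≤ K ^ (B + 1) * ∏ p ∈ n.primeFactors, (p : ℝ) ^ (n.factorization p * ε) := by
        rw [prod_mul_distrib]
        gcongr

end DivisorBound

lemma card_le_div_of_modEq {q d : ℕ} (hd : d ∣ q) {S : Finset ℕ} (hlt : ∀ x ∈ S, x < q)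
    (hmod : ∀ x ∈ S, ∀ y ∈ S, x ≡ y [MOD d]) : #S ≤ q / d := by
  rw [← card_range (q / d)]
  refine card_le_card_of_injOn (· / d) (fun x hx => mem_range.2 ?_) (fun x hx y hy hxy => ?_)
  · exact Nat.div_lt_div_of_lt_of_dvd hd (hlt x hx)
  · rw [← Nat.div_add_mod x d, ← Nat.div_add_mod y d, hmod x hx y hy]
    exact congrArg (d * · + y % d) hxy

lemma ZMod.val_modEq_of_dvd_val_sub {q d : ℕ} [NeZero q] (hd : d ∣ q) {a b : ZMod q}
    (hab : d ∣ (a - b).val) : a.val ≡ b.val [MOD d] := by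
  have h : ZMod.castHom hd (ZMod d) (a - b) = 0 := by
    rw [ZMod.castHom_apply, ZMod.cast_eq_val, ZMod.natCast_eq_zero_iff]
    exact hab
  rw [map_sub, sub_eq_zero, ZMod.castHom_apply, ZMod.castHom_apply, ZMod.cast_eq_val,
    ZMod.cast_eq_val] at h
  exact (ZMod.natCast_eq_natCast_iff _ _ _).1 h

lemma card_filter_gcd_val_sub_eq_le {q d : ℕ} [NeZero q] (hd : d ∣ q) (s : Finset (ZMod q))
    (a : ZMod q) : #{b ∈ s | (a - b).val.gcd q = d} ≤ q / d := by
  have hdvd : ∀ b ∈ {b ∈ s | (a - b).val.gcd q = d}, a.val ≡ b.val [MOD d] := fun b hb =>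
    ZMod.val_modEq_of_dvd_val_sub hd ((mem_filter.1 hb).2 ▸ Nat.gcd_dvd_left _ _)
  rw [← card_image_of_injective _ (ZMod.val_injective q)]
  refine card_le_div_of_modEq hd (fun x hx => ?_) (fun x hx y hy => ?_)
  · obtain ⟨b, -, rfl⟩ := mem_image.1 hx
    exact ZMod.val_lt b
  · obtain ⟨b, hb, rfl⟩ := mem_image.1 hx
    obtain ⟨c, hc, rfl⟩ := mem_image.1 hy
    exact (hdvd b hb).symm.trans (hdvd c hc)

lemma mul_sqrt_le_sqrt_mul_sqrt {N d A Q : ℝ} (hN : 0 ≤ N) (hd : 0 ≤ d) (hNA : N ≤ A)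
    (hNQ : N * d ≤ Q) : N * √d ≤ √A * √Q := by
  rw [← sqrt_mul (hN.trans hNA), ← sqrt_sq hN, ← sqrt_mul (sq_nonneg N)]
  refine sqrt_le_sqrt ?_
  rw [sq, mul_assoc]
  exact mul_le_mul hNA hNQ (by positivity) (hN.trans hNA)

lemma sum_sqrt_gcd_val_sub_le {q : ℕ} [NeZero q] (s : Finset (ZMod q)) (a : ZMod q) :
    ∑ b ∈ s, √((a - b).val.gcd q : ℝ) ≤ #q.divisors * √(#s : ℝ) * √(q : ℝ) := by
  have hmaps : ∀ b ∈ s, (a - b).val.gcd q ∈ q.divisors := fun b _ =>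
    Nat.mem_divisors.2 ⟨Nat.gcd_dvd_right _ _, NeZero.ne q⟩
  rw [← sum_fiberwise_of_maps_to hmaps, mul_assoc, ← nsmul_eq_mul, ← sum_const]
  refine sum_le_sum fun d hd => ?_
  have hdq : d ∣ q := Nat.dvd_of_mem_divisors hd
  set N := #{b ∈ s | (a - b).val.gcd q = d}
  have hfiber : ∑ b ∈ s with (a - b).val.gcd q = d, √((a - b).val.gcd q : ℝ) = N * √(d : ℝ) := by
    rw [sum_congr rfl fun b hb => by rw [(mem_filter.1 hb).2], sum_const, nsmul_eq_mul]
  rw [hfiber]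
  refine mul_sqrt_le_sqrt_mul_sqrt (Nat.cast_nonneg _) (Nat.cast_nonneg _)
    (by exact_mod_cast card_filter_le _ _) ?_
  calc (N : ℝ) * d ≤ ((q / d : ℕ) : ℝ) * d := by
        gcongr
        exact card_filter_gcd_val_sub_eq_le hdq s a
    _ = q := by exact_mod_cast Nat.div_mul_cancel hdq

lemma sum_sum_sqrt_gcd_val_sub_le {q : ℕ} [NeZero q] (s : Finset (ZMod q)) :
    ∑ a ∈ s, ∑ b ∈ s, √((a - b).val.gcd q : ℝ) ≤ #q.divisors * (#s * √(#s : ℝ)) * √(q : ℝ) := by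
  calc ∑ a ∈ s, ∑ b ∈ s, √((a - b).val.gcd q : ℝ)
      ≤ ∑ _a ∈ s, #q.divisors * √(#s : ℝ) * √(q : ℝ) :=
        sum_le_sum fun a _ => sum_sqrt_gcd_val_sub_le s a
    _ = #q.divisors * (#s * √(#s : ℝ)) * √(q : ℝ) := by rw [sum_const, nsmul_eq_mul]; ring

/-- For a subgroup `H ≤ (ℤ/qℤ)ˣ`,
`Σ_{a₁,a₂ ∈ H} gcd(a₁ − a₂, q)^{1/2} ≪_ε |H|^{3/2} q^{1/2+ε}`. -/
theorem stmt_4 (ε : ℝ) (hε : 0 < ε) :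
    ∃ C : ℝ, 0 < C ∧ ∀ (q : ℕ), 2 ≤ q → ∀ (H : Subgroup (ZMod q)ˣ),
      (∑ᶠ a₁ ∈ (H : Set (ZMod q)ˣ), ∑ᶠ a₂ ∈ (H : Set (ZMod q)ˣ),
          (Nat.gcd ((((a₁ : (ZMod q)ˣ) : ZMod q) - ((a₂ : (ZMod q)ˣ) : ZMod q)).val) q : ℝ)
            ^ ((1 : ℝ) / 2))
        ≤ C * (Nat.card H : ℝ) ^ ((3 : ℝ) / 2) * (q : ℝ) ^ ((1 : ℝ) / 2 + ε) := by
  classical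
  obtain ⟨C, hC, hτ⟩ := card_divisors_le_mul_rpow hε
  refine ⟨C, hC, fun q hq H => ?_⟩
  have : NeZero q := ⟨by omega⟩
  set T := (H : Set (ZMod q)ˣ).toFinset
  have hsum := sum_sum_sqrt_gcd_val_sub_le (T.map ⟨Units.val, Units.val_injective⟩)
  simp only [sum_map, card_map, Function.Embedding.coeFn_mk] at hsum
  have hcard : (Nat.card H : ℝ) = #T := by
    exact_mod_cast Nat.card_eq_card_toFinset (H : Set (ZMod q)ˣ)
  have h32 : (#T : ℝ) ^ ((3 : ℝ) / 2) = #T * √(#T : ℝ) := by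
    rw [sqrt_eq_rpow, show (3 : ℝ) / 2 = 1 + 1 / 2 by norm_num,
      rpow_add' (by positivity) (by norm_num), rpow_one]
  simp only [finsum_mem_eq_toFinset_sum, ← sqrt_eq_rpow]
  rw [hcard, h32, rpow_add (by positivity), ← sqrt_eq_rpow]
  calc _ ≤ #q.divisors * (#T * √(#T : ℝ)) * √(q : ℝ) := hsum
    _ ≤ C * (q : ℝ) ^ ε * (#T * √(#T : ℝ)) * √(q : ℝ) := by gcongr; exact hτ q (NeZero.ne q)
    _ = _ := by ring
end

section
/- Let f be a multiplicative arithmetic function given on prime powers by Hecke eigenvalues λ(n) of the weight-2 Eisenstein series, i.e. λ(n) = σ₁(n)/n^{1/2} where σ₁(n) = Σ_{d|n} d. For a Dirichlet character χ mod q′ and an integer q = p^m (p prime, m ≥ 1), define ν(χ, p^m) := σ₁(p^m) − σ₁(p^{m−1})(χ(p) + χ̄(p)) + σ₁(p^{m−2})|χ(p)|², with the convention σ₁(p^{−1}) = 0. Then ν(χ, p^m) = (p^{m−1}|p − χ(p)|² − |1 − χ(p)|²)/(p − 1), and in particular ν(χ, p^m) is a nonnegative real number with ν(χ, p^m) ≥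 φ(p^m) = p^{m−1}(p−1). -/
/-!
Multiplying by `p - 1` turns each `σ₁(p^k)` into `p^(k+1) - 1`, and the three-term combination
collapses to `p^(m-1) |p - z|² - |1 - z|²`, which is real. Subtracting `φ(p^m) (p - 1)` leaves
`|1 - z|² (p^m - 1) + (1 - |z|²) φ(p^m)`, nonnegative as soon as `|z| ≤ 1`.
-/

open Complex ComplexConjugate

theorem Nat.Prime.cast_sum_divisors_pow_mul_sub_one {R : Type*} [CommRing R] {p : ℕ}
    (hp : p.Prime) (k : ℕ) :
    ((∑ d ∈ (p ^ k).divisors, d : ℕ) : R) * ((p : R) - 1) = (p : R) ^ (k + 1) - 1 := by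
  rw [Nat.sum_divisors_prime_pow hp]
  push_cast
  exact geom_sum_mul _ _

/-- `ν(χ, p^m)` with `z = χ(p)`; the `if` encodes the convention `σ₁(p⁻¹) = 0`. -/
noncomputable def eisensteinNu (p m : ℕ) (z : ℂ) : ℂ :=
  ((∑ d ∈ (p ^ m).divisors, d : ℕ) : ℂ)
    - ((∑ d ∈ (p ^ (m - 1)).divisors, d : ℕ) : ℂ) * (z + conj z)
    + (if m = 1 then 0 else ((∑ d ∈ (p ^ (m - 2)).divisors, d : ℕ) : ℂ))
        * (normSq z : ℂ)

theorem eisensteinNu_succ_mul_sub_one {p : ℕ} (hp : p.Prime) (n : ℕ) (z : ℂ) :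
    eisensteinNu p (n + 1) z * ((p : ℂ) - 1)
      = (p : ℂ) ^ n * normSq ((p : ℂ) - z) - normSq (1 - z) := by
  have hσ := hp.cast_sum_divisors_pow_mul_sub_one (R := ℂ)
  simp only [eisensteinNu]
  rw [← mul_conj, ← mul_conj, ← mul_conj]
  simp only [map_sub, map_one, conj_natCast]
  rcases n with _ | k
  · rw [if_pos rfl, zero_mul, add_zero, Nat.add_sub_cancel]
    linear_combination hσ 1 - (z + conj z) * hσ 0
  · rw [if_neg (by omega), show k + 1 + 1 - 1 = k + 1 by omega, show k + 1 + 1 - 2 = k by omega]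
    linear_combination hσ (k + 2) - (z + conj z) * hσ (k + 1) + (z * conj z) * hσ k

theorem eisensteinNu_succ_eq_ofReal {p : ℕ} (hp : p.Prime) (n : ℕ) (z : ℂ) :
    eisensteinNu p (n + 1) z
      = (((p : ℝ) ^ n * normSq ((p : ℂ) - z) - normSq (1 - z)) / ((p : ℝ) - 1) : ℝ) := by
  have hp1 : (p : ℂ) - 1 ≠ 0 := sub_ne_zero.mpr (by exact_mod_cast hp.one_lt.ne')
  rw [(eq_div_iff hp1).mpr (eisensteinNu_succ_mul_sub_one hp n z)]
  push_cast
  rfl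

theorem pow_mul_normSq_sub_sub_pow_mul_sq_eq (q : ℝ) (n : ℕ) (z : ℂ) :
    q ^ n * normSq ((q : ℂ) - z) - normSq (1 - z) - q ^ n * (q - 1) * (q - 1)
      = normSq (1 - z) * (q ^ (n + 1) - 1) + (1 - normSq z) * (q ^ n * (q - 1)) := by
  simp only [normSq_apply, sub_re, sub_im, ofReal_re, ofReal_im, one_re, one_im]
  ring

theorem totient_prime_pow_succ_le {p : ℕ} (hp : p.Prime) (n : ℕ) {z : ℂ} (hz : ‖z‖ ≤ 1) :
    ((p ^ (n + 1)).totient : ℝ)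
      ≤ ((p : ℝ) ^ n * normSq ((p : ℂ) - z) - normSq (1 - z)) / ((p : ℝ) - 1) := by
  have hp1 : (1 : ℝ) < p := by exact_mod_cast hp.one_lt
  have hz2 : normSq z ≤ 1 := by
    rw [normSq_eq_norm_sq]
    exact pow_le_one₀ (norm_nonneg z) hz
  have hdefect := pow_mul_normSq_sub_sub_pow_mul_sq_eq p n z
  push_cast at hdefect
  rw [Nat.totient_prime_pow_succ hp, le_div_iff₀ (by linarith), sub_nonneg.symm]
  push_cast [Nat.cast_sub hp.one_le]
  rw [hdefect]
  have hpow : (1 : ℝ) ≤ (p : ℝ) ^ (n + 1) := one_le_pow₀ hp1.le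
  exact add_nonneg (mul_nonneg (normSq_nonneg _) (by linarith))
    (mul_nonneg (by linarith) (by positivity))

/-- For the weight-2 Eisenstein local weights, with `z = χ(p)` of modulus 0 or 1,
`ν(χ, p^m) = σ₁(p^m) − σ₁(p^{m−1})(z + z̄) + σ₁(p^{m−2})|z|²`
equals `(p^{m−1}|p − z|² − |1 − z|²)/(p − 1)`, is real, and is at least `φ(p^m)`. -/
theorem stmt_5 (p m : ℕ) (hp : p.Prime) (hm : 1 ≤ m) (z : ℂ)
    (hz : ‖z‖ = 0 ∨ ‖z‖ = 1) :
    (((∑ d ∈ (p ^ m).divisors, d : ℕ) : ℂ)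
        - ((∑ d ∈ (p ^ (m - 1)).divisors, d : ℕ) : ℂ) * (z + (starRingEnd ℂ) z)
        + (if m = 1 then 0 else ((∑ d ∈ (p ^ (m - 2)).divisors, d : ℕ) : ℂ))
            * (Complex.normSq z : ℂ))
      = ((p : ℂ) ^ (m - 1) * (Complex.normSq ((p : ℂ) - z) : ℂ)
          - (Complex.normSq (1 - z) : ℂ)) / ((p : ℂ) - 1) ∧
    (((∑ d ∈ (p ^ m).divisors, d : ℕ) : ℂ)
        - ((∑ d ∈ (p ^ (m - 1)).divisors, d : ℕ) : ℂ) * (z + (starRingEnd ℂ) z)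
        + (if m = 1 then 0 else ((∑ d ∈ (p ^ (m - 2)).divisors, d : ℕ) : ℂ))
            * (Complex.normSq z : ℂ)).im = 0 ∧
    (Nat.totient (p ^ m) : ℝ) ≤
      (((∑ d ∈ (p ^ m).divisors, d : ℕ) : ℂ)
        - ((∑ d ∈ (p ^ (m - 1)).divisors, d : ℕ) : ℂ) * (z + (starRingEnd ℂ) z)
        + (if m = 1 then 0 else ((∑ d ∈ (p ^ (m - 2)).divisors, d : ℕ) : ℂ))
            * (Complex.normSq z : ℂ)).re := by
  obtain ⟨n, rfl⟩ := Nat.exists_eq_add_of_le' hm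
  have hz1 : ‖z‖ ≤ 1 := hz.elim (fun h => h ▸ zero_le_one) le_of_eq
  show eisensteinNu p (n + 1) z = _ ∧ (eisensteinNu p (n + 1) z).im = 0 ∧
    _ ≤ (eisensteinNu p (n + 1) z).re
  rw [eisensteinNu_succ_eq_ofReal hp, ofReal_im, ofReal_re, Nat.add_sub_cancel]
  exact ⟨by push_cast; rfl, rfl, totient_prime_pow_succ_le hp n hz1⟩
end

section
/- Let q ≥ 1 be an integer and for each prime power p^m ∥ q define ν(χ, p^m) = (p^{m−1}|p − χ(p)|² − |1 − χ(p)|²)/(p − 1), and extend ν(χ, ·) multiplicatively to ν(χ, q) = Π_{p^m ∥ q} ν(χ, p^m). Then ν(χ, q) ≥ φ(q) for every Dirichlet character χ. -/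
/-!
Since φ is multiplicative with φ(p^m) = p^{m-1}(p - 1), it suffices to compare the local factors.
For `‖z‖ ≤ 1` and real `p ≥ 1` one has `|p - z|² ≥ (p - 1)²`, and
`|p - z|² - |1 - z|² = (p - 1)(p + 1 - 2 Re z) ≥ (p - 1)²`; writing
`t |p - z|² - |1 - z|² = (t - 1)|p - z|² + (|p - z|² - |1 - z|²)` with `t = p^{m-1} ≥ 1`
gives the local bound `t (p - 1)²`, i.e. the minimum is attained at `z = 1`.
-/

namespace Complex

variable {p : ℝ} {z : ℂ}

lemma sq_sub_one_le_normSq_ofReal_sub (hp : 1 ≤ p) (hz : ‖z‖ ≤ 1) :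
    (p - 1) ^ 2 ≤ normSq (p - z) := by
  have hdist : p - 1 ≤ ‖(p : ℂ) - z‖ := calc
    p - 1 ≤ ‖(p : ℂ)‖ - ‖z‖ := by rw [norm_real, Real.norm_of_nonneg (by linarith)]; linarith
    _ ≤ ‖(p : ℂ) - z‖ := norm_sub_norm_le _ _
  rw [normSq_eq_norm_sq]
  exact pow_le_pow_left₀ (by linarith) hdist 2

lemma sq_sub_one_le_normSq_ofReal_sub_sub_normSq_one_sub (hp : 1 ≤ p) (hz : ‖z‖ ≤ 1) :
    (p - 1) ^ 2 ≤ normSq (p - z) - normSq (1 - z) := by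
  have hre : z.re ≤ 1 := (re_le_norm z).trans hz
  have hdiff : normSq (p - z) - normSq (1 - z) = (p - 1) * (p + 1 - 2 * z.re) := by
    simp only [normSq_apply, sub_re, sub_im, ofReal_re, ofReal_im, one_re, one_im]
    ring
  rw [hdiff]
  nlinarith

lemma mul_sq_sub_one_le_mul_normSq_sub_normSq {t : ℝ} (ht : 1 ≤ t) (hp : 1 ≤ p)
    (hz : ‖z‖ ≤ 1) :
    t * (p - 1) ^ 2 ≤ t * normSq (p - z) - normSq (1 - z) := by
  have h₁ := sq_sub_one_le_normSq_ofReal_sub hp hz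
  have h₂ := sq_sub_one_le_normSq_ofReal_sub_sub_normSq_one_sub hp hz
  nlinarith

end Complex

lemma Nat.cast_totient_eq_prod_primeFactors {n : ℕ} (hn : n ≠ 0) :
    (n.totient : ℝ) =
      ∏ p ∈ n.primeFactors, (p : ℝ) ^ (n.factorization p - 1) * ((p : ℝ) - 1) := by
  rw [Nat.totient_eq_prod_factorization hn, Finsupp.prod, Nat.support_factorization]
  push_cast
  refine Finset.prod_congr rfl fun p hp => ?_
  rw [Nat.cast_sub (Nat.prime_of_mem_primeFactors hp).one_le, Nat.cast_one]

/-- The multiplicative Eisenstein weight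
`ν(χ, q) = Π_{p^m ∥ q} (p^{m−1}|p − χ(p)|² − |1 − χ(p)|²)/(p − 1)` satisfies
`ν(χ, q) ≥ φ(q)`, for any character values `χ(p)` of modulus 0 or 1 at the primes. -/
theorem stmt_6 (q : ℕ) (hq : 1 ≤ q) (z : ℕ → ℂ)
    (hz : ∀ p : ℕ, p.Prime → ‖z p‖ = 0 ∨ ‖z p‖ = 1) :
    (Nat.totient q : ℝ) ≤
      ∏ p ∈ q.primeFactors,
        ((p : ℝ) ^ (q.factorization p - 1) * Complex.normSq ((p : ℂ) - z p)
            - Complex.normSq (1 - z p)) / ((p : ℝ) - 1) := by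
  rw [Nat.cast_totient_eq_prod_primeFactors (by omega)]
  refine Finset.prod_le_prod (fun p hp => ?_) (fun p hp => ?_)
  all_goals
    have hp2 : (2 : ℝ) ≤ p := by exact_mod_cast (Nat.prime_of_mem_primeFactors hp).two_le
  · exact mul_nonneg (by positivity) (by linarith)
  · have ht : (1 : ℝ) ≤ (p : ℝ) ^ (q.factorization p - 1) := one_le_pow₀ (by linarith)
    have hzp : ‖z p‖ ≤ 1 := by
      rcases hz p (Nat.prime_of_mem_primeFactors hp) with h | h <;> norm_num [h]
    rw [le_div_iff₀ (by linarith), mul_assoc, ← sq]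
    simpa only [Complex.ofReal_natCast] using
      Complex.mul_sq_sub_one_le_mul_normSq_sub_normSq (p := p) ht (by linarith) hzp
end

section
/- Let k be an even nonnegative integer and t ∈ ℝ with 0 < |t|. Set ε_t = t/|t|. Then |((ie^t + 1)/sqrt(e^{2t}+1))^{−k} − (−ε_t)^{k/2}| ≪ k·e^{−|t|}, and |(−e^t + e^{−t})/(e^t + e^{−t}) + ε_t| ≪ e^{−2|t|}, with absolute implied constants. -/
/-!
The point `z = (1 + i eᵗ) / √(1 + e²ᵗ)` lies on the unit circle and `z² = -tanh t + i / cosh t`.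
Since `z⁻¹ = z̄`, for real `|r| ≤ 1` we get `‖z^(-2m) - rᵐ‖ = ‖(z²)ᵐ - rᵐ‖ ≤ m ‖z² - r‖` by
telescoping, and for `r = -ε_t` the distance `‖z² - r‖` is at most `|ε_t - tanh t| + 1 / cosh t`.
Both terms are exponentially small: `|ε_t - tanh t| = 2 / (e^{2|t|} + 1)` and `cosh t ≥ e^{|t|} / 2`.
The second estimate is the bound on `|ε_t - tanh t|` itself, the quotient being `-tanh t`.
-/

open Complex ComplexConjugate

theorem norm_pow_sub_pow_le_of_norm_le_one {R : Type*} [SeminormedRing R] [NormOneClass R]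
    {x y : R} (hx : ‖x‖ ≤ 1) (hy : ‖y‖ ≤ 1) (n : ℕ) :
    ‖x ^ n - y ^ n‖ ≤ n * ‖x - y‖ := by
  induction n with
  | zero => simp
  | succ n ih =>
    have hxn : ‖x ^ n‖ ≤ 1 := (norm_pow_le x n).trans (pow_le_one₀ (norm_nonneg x) hx)
    calc ‖x ^ (n + 1) - y ^ (n + 1)‖ = ‖x ^ n * (x - y) + (x ^ n - y ^ n) * y‖ := by
          rw [pow_succ, pow_succ]; noncomm_ring
      _ ≤ ‖x ^ n‖ * ‖x - y‖ + ‖x ^ n - y ^ n‖ * ‖y‖ :=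
          norm_add_le_of_le (norm_mul_le _ _) (norm_mul_le _ _)
      _ ≤ 1 * ‖x - y‖ + (n * ‖x - y‖) * 1 := by gcongr
      _ = (n + 1 : ℕ) * ‖x - y‖ := by push_cast; ring

theorem Complex.norm_zpow_neg_sub_pow_le {z : ℂ} (hz : ‖z‖ = 1) {r : ℝ} (hr : |r| ≤ 1) (m : ℕ) :
    ‖z ^ (-((m + m : ℕ) : ℤ)) - (r : ℂ) ^ m‖ ≤ m * ‖z ^ 2 - r‖ := by
  have hconj : z ^ (-((m + m : ℕ) : ℤ)) - (r : ℂ) ^ m = conj ((z ^ 2) ^ m - (r : ℂ) ^ m) := by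
    rw [zpow_neg, zpow_natCast, ← inv_pow, inv_eq_conj hz, map_sub, map_pow, map_pow, map_pow,
      conj_ofReal, ← pow_mul, two_mul]
  rw [hconj, RCLike.norm_conj]
  refine norm_pow_sub_pow_le_of_norm_le_one ?_ ?_ m
  · rw [norm_pow, hz, one_pow]
  · rwa [norm_real, Real.norm_eq_abs]

namespace Real

theorem one_sub_tanh_le (t : ℝ) : 1 - tanh t ≤ 2 * exp (-2 * t) := by
  have hpos := exp_pos t
  have hneg := exp_pos (-t)
  calc 1 - tanh t = 2 * exp (-t) / (exp t + exp (-t)) := by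
        rw [tanh_eq]; field_simp; ring
    _ ≤ 2 * exp (-t) / exp t := by gcongr; linarith
    _ = 2 * exp (-2 * t) := by rw [mul_div_assoc, ← exp_sub]; ring_nf

theorem abs_div_abs_sub_tanh_le (t : ℝ) : |t / |t| - tanh t| ≤ 2 * exp (-2 * |t|) := by
  rcases lt_trichotomy t 0 with ht | rfl | ht
  · have h := one_sub_tanh_le (-t)
    rw [tanh_neg] at h
    rw [abs_of_neg ht, div_neg, div_self ht.ne, abs_of_nonpos (by linarith [neg_one_lt_tanh t])]
    linarith
  · simp
  · rw [abs_of_pos ht, div_self ht.ne', abs_of_nonneg (by linarith [tanh_lt_one t])]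
    exact one_sub_tanh_le t

theorem inv_cosh_le (t : ℝ) : (cosh t)⁻¹ ≤ 2 * exp (-|t|) := by
  have hcosh : exp |t| / 2 ≤ cosh t := by
    rw [← cosh_abs, cosh_eq]; gcongr; linarith [exp_pos (-|t|)]
  calc (cosh t)⁻¹ ≤ (exp |t| / 2)⁻¹ := by gcongr
    _ = 2 * exp (-|t|) := by rw [inv_div, exp_neg, div_eq_mul_inv]

end Real

noncomputable def circlePoint (t : ℝ) : ℂ :=
  (I * (Real.exp t : ℝ) + 1) / ((Real.sqrt (Real.exp (2 * t) + 1) : ℝ) : ℂ)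

theorem norm_circlePoint (t : ℝ) : ‖circlePoint t‖ = 1 := by
  have hsqrt : 0 < Real.sqrt (Real.exp (2 * t) + 1) := Real.sqrt_pos.mpr (by positivity)
  rw [circlePoint, norm_div, norm_real, Real.norm_eq_abs, abs_of_pos hsqrt, add_comm, mul_comm,
    ← ofReal_one, norm_add_mul_I, div_eq_one_iff_eq hsqrt.ne', two_mul, Real.exp_add]
  ring_nf

theorem circlePoint_sq (t : ℝ) : circlePoint t ^ 2 = -Real.tanh t + I * (Real.cosh t)⁻¹ := by
  have hsq : ((Real.sqrt (Real.exp (2 * t) + 1) : ℝ) : ℂ) ^ 2 = (Real.exp t : ℂ) ^ 2 + 1 := by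
    rw [← ofReal_pow, Real.sq_sqrt (by positivity), two_mul, Real.exp_add]; push_cast; ring
  rw [circlePoint, div_pow, hsq, Real.tanh_eq, Real.cosh_eq, Real.exp_neg]
  push_cast
  field_simp
  congr 1
  linear_combination cexp t ^ 2 * I_sq

theorem norm_circlePoint_sq_sub_le (t : ℝ) :
    ‖circlePoint t ^ 2 - ((-(t / |t|) : ℝ) : ℂ)‖ ≤ 4 * Real.exp (-|t|) := by
  have hsplit : circlePoint t ^ 2 - ((-(t / |t|) : ℝ) : ℂ)
      = ((t / |t| - Real.tanh t : ℝ) : ℂ) + I * ((Real.cosh t)⁻¹ : ℝ) := by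
    rw [circlePoint_sq]; push_cast; ring
  have hexp : Real.exp (-2 * |t|) ≤ Real.exp (-|t|) :=
    Real.exp_le_exp.mpr (by linarith [abs_nonneg t])
  calc ‖circlePoint t ^ 2 - ((-(t / |t|) : ℝ) : ℂ)‖
      ≤ |t / |t| - Real.tanh t| + (Real.cosh t)⁻¹ := by
        rw [hsplit]
        refine (norm_add_le _ _).trans_eq ?_
        rw [norm_mul, norm_I, one_mul, norm_real, norm_real, Real.norm_eq_abs, Real.norm_eq_abs,
          abs_of_pos (inv_pos.mpr (Real.cosh_pos t))]
    _ ≤ 2 * Real.exp (-2 * |t|) + 2 * Real.exp (-|t|) :=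
        add_le_add (Real.abs_div_abs_sub_tanh_le t) (Real.inv_cosh_le t)
    _ ≤ 4 * Real.exp (-|t|) := by linarith

/-- With absolute implied constants, for even `k ≥ 0` and `t ≠ 0`, setting
`ε_t = t/|t|`: `|((ie^t+1)/√(e^{2t}+1))^{−k} − (−ε_t)^{k/2}| ≪ k e^{−|t|}` and
`|(−e^t+e^{−t})/(e^t+e^{−t}) + ε_t| ≪ e^{−2|t|}`. -/
theorem stmt_10 :
    ∃ C : ℝ, 0 < C ∧ ∀ (k : ℕ) (t : ℝ), Even k → t ≠ 0 →
      ‖(((Complex.I * (Real.exp t : ℝ) + 1) / ((Real.sqrt (Real.exp (2 * t) + 1) : ℝ) : ℂ))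
              ^ (-(k : ℤ)) - ((-(t / |t|) : ℝ) : ℂ) ^ (k / 2))‖
        ≤ C * k * Real.exp (-|t|) ∧
      abs ((-Real.exp t + Real.exp (-t)) / (Real.exp t + Real.exp (-t)) + t / |t|)
        ≤ C * Real.exp (-2 * |t|) := by
  refine ⟨2, two_pos, fun k t hk _ => ⟨?_, ?_⟩⟩
  · obtain ⟨m, rfl⟩ := hk
    have hsign : |-(t / |t|)| ≤ 1 := by
      rw [abs_neg, abs_div, abs_abs]; exact div_self_le_one _
    rw [show (m + m) / 2 = m by omega]
    change ‖circlePoint t ^ (-((m + m : ℕ) : ℤ)) - _‖ ≤ _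
    calc _ ≤ m * ‖circlePoint t ^ 2 - ((-(t / |t|) : ℝ) : ℂ)‖ :=
          Complex.norm_zpow_neg_sub_pow_le (norm_circlePoint t) hsign m
      _ ≤ m * (4 * Real.exp (-|t|)) := by gcongr; exact norm_circlePoint_sq_sub_le t
      _ = 2 * ((m + m : ℕ) : ℝ) * Real.exp (-|t|) := by push_cast; ring
  · have htanh : (-Real.exp t + Real.exp (-t)) / (Real.exp t + Real.exp (-t)) = -Real.tanh t := by
      rw [Real.tanh_eq]; ring
    rw [htanh, neg_add_eq_sub]
    exact Real.abs_div_abs_sub_tanh_le t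
end

section
/- Let ℓ be a prime and m ≥ 1, and let χ be a Dirichlet character. With ν(χ, q; ℓ) the local Eisenstein weights (for the weight-2 Eisenstein series, λ(n) = σ₁(n)/√n), for q with ℓ^m = gcd(q, ℓ^∞) one has ν(χ, q; ℓ) − ν(χ, q; 1) = −|1 − χ(ℓ)|²·ν(χ, q/ℓ^m; 1). -/
open Finset ArithmeticFunction Complex

noncomputable def s13K {q' : ℕ} (χ : DirichletCharacter ℂ q') (n₁ n₂ : ℕ) : ℂ :=
  ((ArithmeticFunction.moebius n₁ : ℤ) : ℂ) * (starRingEnd ℂ) (χ (n₁ : ZMod q')) *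
  ((ArithmeticFunction.moebius n₂ : ℤ) : ℂ) * χ (n₂ : ZMod q')

noncomputable def s13c {q' : ℕ} (χ : DirichletCharacter ℂ q') (l n₁ n₂ N : ℕ) : ℂ :=
  if Nat.gcd (n₂ * N) l ∣ N then
    s13K χ n₁ n₂ * ((ArithmeticFunction.sigma 1 (N / Nat.gcd N l) : ℕ) : ℂ) *
      ((Nat.gcd N l : ℕ) : ℂ) * χ ((l / Nat.gcd N l : ℕ) : ZMod q')
  else 0

lemma s13_sqrt_key (s N g : ℕ) (hN : 0 < N) (hg : g ∣ N) (hgpos : 0 < g) :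
    ((s : ℕ) : ℂ) / ((Real.sqrt ((N / g : ℕ) : ℝ) : ℝ) : ℂ) *
      ((Real.sqrt (g : ℕ) : ℝ) : ℂ) * ((Real.sqrt (N : ℕ) : ℝ) : ℂ)
      = (s : ℂ) * (g : ℂ) := by
  have hNg : 0 < N / g := Nat.div_pos (Nat.le_of_dvd hN hg) hgpos
  have hmul : (N : ℝ) = (g : ℝ) * ((N / g : ℕ) : ℝ) := by
    exact_mod_cast (Nat.mul_div_cancel' hg).symm
  have hR : (s : ℝ) / Real.sqrt ((N / g : ℕ) : ℝ) * Real.sqrt (g : ℝ) * Real.sqrt (N : ℝ)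
      = (s : ℝ) * (g : ℝ) := by
    rw [hmul, Real.sqrt_mul (by positivity)]
    have h1 : Real.sqrt ((N / g : ℕ) : ℝ) ≠ 0 := by
      refine ne_of_gt (Real.sqrt_pos.mpr ?_)
      exact_mod_cast hNg
    field_simp
    rw [Real.sq_sqrt (by positivity)]
  exact_mod_cast hR

lemma s13_nu_eq {q' : ℕ} (χ : DirichletCharacter ℂ q') (Q l : ℕ) (hQ : Q ≠ 0) :
    (∑ n₁ ∈ Q.divisors, ∑ n₂ ∈ (Q / n₁).divisors,
      if Nat.gcd (n₂ * (Q / n₁ / n₂)) l ∣ (Q / n₁ / n₂) then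
          ((ArithmeticFunction.moebius n₁ : ℤ) : ℂ) * (starRingEnd ℂ) (χ (n₁ : ZMod q')) *
            ((ArithmeticFunction.moebius n₂ : ℤ) : ℂ) * χ (n₂ : ZMod q') *
            (((∑ d ∈ ((Q / n₁ / n₂) / Nat.gcd (Q / n₁ / n₂) l).divisors, d : ℕ) : ℂ) /
              ((Real.sqrt ((Q / n₁ / n₂) / Nat.gcd (Q / n₁ / n₂) l : ℕ) : ℝ) : ℂ)) *
            ((Real.sqrt (Nat.gcd (Q / n₁ / n₂) l : ℕ) : ℝ) : ℂ) *
            ((Real.sqrt (Q / n₁ / n₂ : ℕ) : ℝ) : ℂ) *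
            χ ((l / Nat.gcd (Q / n₁ / n₂) l : ℕ) : ZMod q')
        else 0)
    = ∑ n₁ ∈ Q.divisors, ∑ n₂ ∈ (Q / n₁).divisors, s13c χ l n₁ n₂ (Q / n₁ / n₂) := by
  refine Finset.sum_congr rfl fun n₁ h₁ => Finset.sum_congr rfl fun n₂ h₂ => ?_
  rw [Nat.mem_divisors] at h₁ h₂
  have hN : 0 < Q / n₁ / n₂ := by
    have h1 : 0 < Q / n₁ := Nat.div_pos (Nat.le_of_dvd (Nat.pos_of_ne_zero hQ) h₁.1)
      (Nat.pos_of_dvd_of_pos h₁.1 (Nat.pos_of_ne_zero hQ))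
    exact Nat.div_pos (Nat.le_of_dvd h1 h₂.1) (Nat.pos_of_dvd_of_pos h₂.1 h1)
  set N := Q / n₁ / n₂ with hNdef
  unfold s13c s13K
  split
  · rw [sigma_one_apply]
    have key := s13_sqrt_key (∑ d ∈ (N / Nat.gcd N l).divisors, d) N (Nat.gcd N l) hN
      (Nat.gcd_dvd_left N l) (Nat.gcd_pos_of_pos_left l hN)
    linear_combination (((ArithmeticFunction.moebius n₁ : ℤ) : ℂ) *
      (starRingEnd ℂ) (χ (n₁ : ZMod q')) *
      ((ArithmeticFunction.moebius n₂ : ℤ) : ℂ) * χ (n₂ : ZMod q') *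
      χ ((l / Nat.gcd N l : ℕ) : ZMod q')) * key
  · rfl

lemma s13_split2 {M N : ℕ} (hM : M ≠ 0) (hN : N ≠ 0) (h : Nat.Coprime M N) (f : ℕ → ℂ) :
    ∑ d ∈ (M * N).divisors, f d = ∑ a ∈ M.divisors, ∑ b ∈ N.divisors, f (a * b) := by
  rw [Nat.divisors_mul, ← Finset.image_mul_product, Finset.sum_image, Finset.sum_product]
  rintro ⟨a, b⟩ hab ⟨a', b'⟩ hab' heq
  simp only [Finset.mem_coe, Finset.mem_product, Nat.mem_divisors] at hab hab' heq
  have ha : a = a' := by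
    have h1 : a ∣ a' * b' := heq ▸ Dvd.intro b rfl
    have h2 : a' ∣ a * b := heq ▸ Dvd.intro b' rfl
    have c1 : Nat.Coprime a b' := Nat.Coprime.coprime_dvd_left hab.1.1
      (Nat.Coprime.coprime_dvd_right hab'.2.1 h)
    have c2 : Nat.Coprime a' b := Nat.Coprime.coprime_dvd_left hab'.1.1
      (Nat.Coprime.coprime_dvd_right hab.2.1 h)
    exact Nat.dvd_antisymm (c1.dvd_of_dvd_mul_right h1) (c2.dvd_of_dvd_mul_right h2)
  subst ha
  have hb : b = b' := by
    have hapos : 0 < a := Nat.pos_of_dvd_of_pos hab.1.1 (Nat.pos_of_ne_zero hM)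
    exact Nat.eq_of_mul_eq_mul_left hapos heq
  simp [hb]

lemma s13_split4 {M N : ℕ} (hM : M ≠ 0) (hN : N ≠ 0) (h : Nat.Coprime M N)
    (f : ℕ → ℕ → ℕ → ℂ) :
    (∑ n₁ ∈ (M * N).divisors, ∑ n₂ ∈ ((M * N) / n₁).divisors,
        f n₁ n₂ ((M * N) / n₁ / n₂))
    = ∑ a ∈ M.divisors, ∑ c ∈ (M / a).divisors, ∑ b ∈ N.divisors, ∑ d ∈ (N / b).divisors,
        f (a * b) (c * d) ((M / a / c) * (N / b / d)) := by
  rw [s13_split2 hM hN h]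
  refine Finset.sum_congr rfl fun a ha => ?_
  rw [Nat.mem_divisors] at ha
  rw [Finset.sum_comm]
  refine Finset.sum_congr rfl fun b hb => ?_
  rw [Nat.mem_divisors] at hb
  have hMa : M / a ≠ 0 := Nat.ne_of_gt (Nat.div_pos (Nat.le_of_dvd
    (Nat.pos_of_ne_zero hM) ha.1) (Nat.pos_of_dvd_of_pos ha.1 (Nat.pos_of_ne_zero hM)))
  have hNb : N / b ≠ 0 := Nat.ne_of_gt (Nat.div_pos (Nat.le_of_dvd
    (Nat.pos_of_ne_zero hN) hb.1) (Nat.pos_of_dvd_of_pos hb.1 (Nat.pos_of_ne_zero hN)))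
  have hcop : Nat.Coprime (M / a) (N / b) :=
    Nat.Coprime.coprime_dvd_left (Nat.div_dvd_of_dvd ha.1)
      (Nat.Coprime.coprime_dvd_right (Nat.div_dvd_of_dvd hb.1) h)
  have key : (M * N) / (a * b) = (M / a) * (N / b) :=
    (Nat.div_mul_div_comm ha.1 hb.1).symm
  rw [key, s13_split2 hMa hNb hcop]
  refine Finset.sum_congr rfl fun c hc => Finset.sum_congr rfl fun d hd => ?_
  rw [Nat.mem_divisors] at hc hd
  rw [(Nat.div_mul_div_comm hc.1 hd.1).symm]

lemma s13K_mul {q' : ℕ} (χ : DirichletCharacter ℂ q') {x u y v : ℕ}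
    (h1 : Nat.Coprime x u) (h2 : Nat.Coprime y v) :
    s13K χ (x * u) (y * v) = s13K χ x y * s13K χ u v := by
  unfold s13K
  rw [isMultiplicative_moebius.map_mul_of_coprime h1,
    isMultiplicative_moebius.map_mul_of_coprime h2]
  push_cast [Nat.cast_mul, map_mul]
  ring

lemma s13c_split {q' : ℕ} (χ : DirichletCharacter ℂ q') {ℓ b d w : ℕ} (hℓ : ℓ.Prime)
    (hb : ¬ ℓ ∣ b) (hd : ¬ ℓ ∣ d) (hw : ¬ ℓ ∣ w)
    (l : ℕ) (hl : l = 1 ∨ l = ℓ) (i j e : ℕ) :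
    s13c χ l (ℓ ^ i * b) (ℓ ^ j * d) (ℓ ^ e * w)
      = s13c χ l (ℓ ^ i) (ℓ ^ j) (ℓ ^ e) * (s13K χ b d *
        ((ArithmeticFunction.sigma 1 w : ℕ) : ℂ)) := by
  have hib : Nat.Coprime (ℓ ^ i) b := Nat.Coprime.pow_left i ((hℓ.coprime_iff_not_dvd).mpr hb)
  have hjd : Nat.Coprime (ℓ ^ j) d := Nat.Coprime.pow_left j ((hℓ.coprime_iff_not_dvd).mpr hd)
  have hew : ∀ e', Nat.Coprime (ℓ ^ e') w :=
    fun e' => Nat.Coprime.pow_left e' ((hℓ.coprime_iff_not_dvd).mpr hw)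
  have hK := s13K_mul χ hib hjd
  have hσ : ∀ e', ((ArithmeticFunction.sigma 1 (ℓ ^ e' * w) : ℕ) : ℂ)
      = ((ArithmeticFunction.sigma 1 (ℓ ^ e') : ℕ) : ℂ) *
        ((ArithmeticFunction.sigma 1 w : ℕ) : ℂ) := by
    intro e'
    rw [← Nat.cast_mul, ← isMultiplicative_sigma.map_mul_of_coprime (hew e')]
  have gcd_of_dvd : ∀ x, ℓ ∣ x → Nat.gcd x ℓ = ℓ := fun x hx => by
    rw [Nat.gcd_comm]; exact Nat.gcd_eq_left hx
  have gcd_of_not : ∀ x, ¬ ℓ ∣ x → Nat.gcd x ℓ = 1 := fun x hx =>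
    Nat.coprime_comm.mp ((hℓ.coprime_iff_not_dvd).mpr hx)
  rcases hl with rfl | rfl
  · unfold s13c
    simp only [Nat.gcd_one_right, one_dvd, if_true, Nat.div_one, Nat.cast_one, map_one]
    rw [hσ e, hK]
    ring
  · rcases e with _ | e'
    · by_cases hj : j = 0
      · subst hj
        unfold s13c
        simp only [pow_zero, one_mul, mul_one]
        rw [gcd_of_not (d * w) (by rw [hℓ.dvd_mul]; push_neg; exact ⟨hd, hw⟩),
          gcd_of_not w hw, gcd_of_not 1 hℓ.not_dvd_one,
          if_pos (one_dvd _), if_pos (one_dvd _)]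
        simp only [Nat.div_one, Nat.cast_one, mul_one]
        simp only [pow_zero, one_mul] at hK
        rw [hK]
        have hσ1 : ((ArithmeticFunction.sigma 1 1 : ℕ) : ℂ) = 1 := by
          rw [isMultiplicative_sigma.1]; norm_num
        rw [hσ1]
        ring
      · have hj1 : l ∣ l ^ j := dvd_pow_self l hj
        unfold s13c
        simp only [pow_zero, one_mul, mul_one]
        rw [gcd_of_dvd (l ^ j * d * w) (Dvd.dvd.mul_right (Dvd.dvd.mul_right hj1 d) w),
          gcd_of_dvd (l ^ j) hj1,
          if_neg hw, if_neg hℓ.not_dvd_one, zero_mul]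
    · have hedvd : l ∣ l ^ (e' + 1) := dvd_pow_self l (Nat.succ_ne_zero e')
      have h1 : l ∣ l ^ (e' + 1) * w := Dvd.dvd.mul_right hedvd w
      have hdiv1 : l ^ (e' + 1) * w / l = l ^ e' * w := by
        rw [pow_succ, mul_comm (l ^ e') l, mul_assoc, Nat.mul_div_cancel_left _ hℓ.pos]
      have hdiv2 : l ^ (e' + 1) / l = l ^ e' := by
        rw [pow_succ, Nat.mul_div_cancel _ hℓ.pos]
      unfold s13c
      rw [gcd_of_dvd (l ^ j * d * (l ^ (e' + 1) * w)) (Dvd.dvd.mul_left h1 _),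
        gcd_of_dvd (l ^ (e' + 1) * w) h1,
        gcd_of_dvd (l ^ j * l ^ (e' + 1)) (Dvd.dvd.mul_left hedvd _),
        gcd_of_dvd (l ^ (e' + 1)) hedvd,
        if_pos h1, if_pos hedvd, hdiv1, hdiv2, Nat.div_self hℓ.pos]
      rw [hσ e', hK]
      ring

lemma s13c_one {q' : ℕ} (χ : DirichletCharacter ℂ q') (n₁ n₂ N : ℕ) :
    s13c χ 1 n₁ n₂ N = s13K χ n₁ n₂ * ((ArithmeticFunction.sigma 1 N : ℕ) : ℂ) := by
  unfold s13c
  simp [Nat.gcd_one_right]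

-- the sigma recurrence in ℂ

lemma s13_sigma_rec {ℓ : ℕ} (hℓ : ℓ.Prime) (e : ℕ) :
    ((ArithmeticFunction.sigma 1 (ℓ ^ (e + 1)) : ℕ) : ℂ)
      = (ℓ : ℂ) * ((ArithmeticFunction.sigma 1 (ℓ ^ e) : ℕ) : ℂ) + 1 := by
  have h : ArithmeticFunction.sigma 1 (ℓ ^ (e + 1)) = ℓ * ArithmeticFunction.sigma 1 (ℓ ^ e) + 1 := by
    rw [sigma_one_apply_prime_pow hℓ, sigma_one_apply_prime_pow hℓ]
    simpa using geom_sum_succ (x := ℓ) (n := e + 1)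
  rw [h]; push_cast; ring

lemma s13_delta {q' : ℕ} (χ : DirichletCharacter ℂ q') {ℓ : ℕ} (hℓ : ℓ.Prime)
    (n₁ n₂ e : ℕ) (h : 1 ≤ e ∨ ℓ ∣ n₂) :
    s13c χ ℓ n₁ n₂ (ℓ ^ e) - s13c χ 1 n₁ n₂ (ℓ ^ e) = - s13K χ n₁ n₂ := by
  rw [s13c_one]
  rcases e with _ | e'
  · rcases h with h | h
    · omega
    · unfold s13c
      rw [pow_zero, mul_one, if_neg]
      · have : ((ArithmeticFunction.sigma 1 1 : ℕ) : ℂ) = 1 := by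
          rw [isMultiplicative_sigma.1]; norm_num
        rw [this]; ring
      · intro hc
        exact hℓ.not_dvd_one (dvd_trans (Nat.dvd_gcd h dvd_rfl) hc)
  · have hedvd : ℓ ∣ ℓ ^ (e' + 1) := dvd_pow_self ℓ (Nat.succ_ne_zero e')
    have hgcd : Nat.gcd (ℓ ^ (e' + 1)) ℓ = ℓ := by
      rw [Nat.gcd_comm]; exact Nat.gcd_eq_left hedvd
    have hgcd2 : Nat.gcd (n₂ * ℓ ^ (e' + 1)) ℓ = ℓ := by
      rw [Nat.gcd_comm]; exact Nat.gcd_eq_left (Dvd.dvd.mul_left hedvd n₂)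
    unfold s13c
    rw [hgcd2, hgcd, if_pos hedvd, Nat.div_self hℓ.pos, Nat.cast_one, map_one,
      pow_succ, Nat.mul_div_cancel _ hℓ.pos, ← pow_succ ℓ e', s13_sigma_rec hℓ e']
    ring

lemma s13_delta0 {q' : ℕ} (χ : DirichletCharacter ℂ q') {ℓ : ℕ} (hℓ : ℓ.Prime)
    (n₁ n₂ : ℕ) (h : ¬ ℓ ∣ n₂) :
    s13c χ ℓ n₁ n₂ 1 - s13c χ 1 n₁ n₂ 1 = s13K χ n₁ n₂ * (χ ((ℓ : ℕ) : ZMod q') - 1) := by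
  rw [s13c_one]
  have hσ1 : ((ArithmeticFunction.sigma 1 1 : ℕ) : ℂ) = 1 := by
    rw [isMultiplicative_sigma.1]; norm_num
  have hgcd : Nat.gcd (n₂ * 1) ℓ = 1 := by
    rw [mul_one]
    exact Nat.coprime_comm.mp ((hℓ.coprime_iff_not_dvd).mpr h)
  unfold s13c
  rw [hgcd, if_pos (one_dvd 1), Nat.gcd_one_left, Nat.div_one, Nat.div_one, hσ1,
    Nat.cast_one]
  ring

lemma s13K_one_one {q' : ℕ} (χ : DirichletCharacter ℂ q') : s13K χ 1 1 = 1 := by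
  unfold s13K; simp

lemma s13K_one_p {q' : ℕ} (χ : DirichletCharacter ℂ q') {ℓ : ℕ} (hℓ : ℓ.Prime) :
    s13K χ 1 ℓ = - χ ((ℓ : ℕ) : ZMod q') := by
  unfold s13K; simp [moebius_apply_prime hℓ]

lemma s13K_p_one {q' : ℕ} (χ : DirichletCharacter ℂ q') {ℓ : ℕ} (hℓ : ℓ.Prime) :
    s13K χ ℓ 1 = - (starRingEnd ℂ) (χ ((ℓ : ℕ) : ZMod q')) := by
  unfold s13K; simp [moebius_apply_prime hℓ]

lemma s13K_p_p {q' : ℕ} (χ : DirichletCharacter ℂ q') {ℓ : ℕ} (hℓ : ℓ.Prime) :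
    s13K χ ℓ ℓ = (starRingEnd ℂ) (χ ((ℓ : ℕ) : ZMod q')) * χ ((ℓ : ℕ) : ZMod q') := by
  unfold s13K; simp [moebius_apply_prime hℓ]

lemma s13c_zero_left {q' : ℕ} (χ : DirichletCharacter ℂ q') {ℓ i : ℕ} (hℓ : ℓ.Prime)
    (hi : 2 ≤ i) (l n₂ N : ℕ) : s13c χ l (ℓ ^ i) n₂ N = 0 := by
  have hμ : ArithmeticFunction.moebius (ℓ ^ i) = 0 := by
    rw [moebius_apply_prime_pow hℓ (by omega)]
    simp [show i ≠ 1 by omega]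
  unfold s13c s13K
  rw [hμ]
  simp

lemma s13c_zero_right {q' : ℕ} (χ : DirichletCharacter ℂ q') {ℓ j : ℕ} (hℓ : ℓ.Prime)
    (hj : 2 ≤ j) (l n₁ N : ℕ) : s13c χ l n₁ (ℓ ^ j) N = 0 := by
  have hμ : ArithmeticFunction.moebius (ℓ ^ j) = 0 := by
    rw [moebius_apply_prime_pow hℓ (by omega)]
    simp [show j ≠ 1 by omega]
  unfold s13c s13K
  rw [hμ]
  simp

lemma s13_collapse (n : ℕ) (f : ℕ → ℂ) (h : ∀ k, 2 ≤ k → f k = 0) :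
    ∑ k ∈ Finset.range (n + 1), f k = f 0 + if 1 ≤ n then f 1 else 0 := by
  rcases n with _ | n
  · simp
  · rw [← Finset.sum_subset (Finset.range_subset_range.mpr (by omega : 2 ≤ n + 2))
      (fun x hx hx2 => h x (by simp at hx2; omega))]
    rw [Finset.sum_range_succ, Finset.sum_range_one, if_pos (by omega)]

lemma s13_delta0' {q' : ℕ} (χ : DirichletCharacter ℂ q') {ℓ : ℕ} (hℓ : ℓ.Prime)
    (n₁ n₂ : ℕ) (h : ¬ ℓ ∣ n₂) :
    s13c χ ℓ n₁ n₂ (ℓ ^ 0) - s13c χ 1 n₁ n₂ (ℓ ^ 0)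
      = s13K χ n₁ n₂ * (χ ((ℓ : ℕ) : ZMod q') - 1) := by
  rw [pow_zero]
  exact s13_delta0 χ hℓ n₁ n₂ h

lemma s13K_eval00 {q' : ℕ} (χ : DirichletCharacter ℂ q') (ℓ : ℕ) :
    s13K χ (ℓ ^ 0) (ℓ ^ 0) = 1 := by
  rw [pow_zero]; exact s13K_one_one χ

lemma s13K_eval01 {q' : ℕ} (χ : DirichletCharacter ℂ q') {ℓ : ℕ} (hℓ : ℓ.Prime) :
    s13K χ (ℓ ^ 0) (ℓ ^ 1) = - χ ((ℓ : ℕ) : ZMod q') := by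
  rw [pow_zero, pow_one]; exact s13K_one_p χ hℓ

lemma s13K_eval10 {q' : ℕ} (χ : DirichletCharacter ℂ q') {ℓ : ℕ} (hℓ : ℓ.Prime) :
    s13K χ (ℓ ^ 1) (ℓ ^ 0) = - (starRingEnd ℂ) (χ ((ℓ : ℕ) : ZMod q')) := by
  rw [pow_zero, pow_one]; exact s13K_p_one χ hℓ

lemma s13K_eval11 {q' : ℕ} (χ : DirichletCharacter ℂ q') {ℓ : ℕ} (hℓ : ℓ.Prime) :
    s13K χ (ℓ ^ 1) (ℓ ^ 1)
      = (starRingEnd ℂ) (χ ((ℓ : ℕ) : ZMod q')) * χ ((ℓ : ℕ) : ZMod q') := by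
  rw [pow_one]; exact s13K_p_p χ hℓ

/-- For a prime `ℓ` with `ℓ^m ∥ q` (m ≥ 1), the weight-2 Eisenstein weights
satisfy `ν(χ, q; ℓ) − ν(χ, q; 1) = −|1 − χ(ℓ)|²·ν(χ, q/ℓ^m; 1)`. -/
theorem stmt_13 (q q' ℓ m : ℕ) (hq : 2 ≤ q) (hℓ : ℓ.Prime) (hm : 1 ≤ m)
    (hdvd : ℓ ^ m ∣ q) (hexact : ¬ ℓ ^ (m + 1) ∣ q)
    (χ : DirichletCharacter ℂ q') :
    let ν : ℕ → ℕ → ℂ := fun Q l =>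
      ∑ n₁ ∈ Q.divisors, ∑ n₂ ∈ (Q / n₁).divisors,
        if Nat.gcd (n₂ * (Q / n₁ / n₂)) l ∣ (Q / n₁ / n₂) then
          ((ArithmeticFunction.moebius n₁ : ℤ) : ℂ) * (starRingEnd ℂ) (χ (n₁ : ZMod q')) *
            ((ArithmeticFunction.moebius n₂ : ℤ) : ℂ) * χ (n₂ : ZMod q') *
            (((∑ d ∈ ((Q / n₁ / n₂) / Nat.gcd (Q / n₁ / n₂) l).divisors, d : ℕ) : ℂ) /
              ((Real.sqrt ((Q / n₁ / n₂) / Nat.gcd (Q / n₁ / n₂) l : ℕ) : ℝ) : ℂ)) *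
            ((Real.sqrt (Nat.gcd (Q / n₁ / n₂) l : ℕ) : ℝ) : ℂ) *
            ((Real.sqrt (Q / n₁ / n₂ : ℕ) : ℝ) : ℂ) *
            χ ((l / Nat.gcd (Q / n₁ / n₂) l : ℕ) : ZMod q')
        else 0
    ν q ℓ - ν q 1 = -((Complex.normSq (1 - χ (ℓ : ZMod q')) : ℂ)) * ν (q / ℓ ^ m) 1 := by
  intro ν
  have hqne : q ≠ 0 := by omega
  set q₀ := q / ℓ ^ m with hq₀def
  have hq0 : q = ℓ ^ m * q₀ := (Nat.mul_div_cancel' hdvd).symm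
  have hpm : ℓ ^ m ≠ 0 := pow_ne_zero m hℓ.pos.ne'
  have hq₀ne : q₀ ≠ 0 := by
    intro h
    rw [h, mul_zero] at hq0
    omega
  have hℓq₀ : ¬ ℓ ∣ q₀ := by
    intro hdq
    exact hexact (by rw [hq0, pow_succ]; exact mul_dvd_mul_left _ hdq)
  have hcop : Nat.Coprime (ℓ ^ m) q₀ :=
    Nat.Coprime.pow_left m ((hℓ.coprime_iff_not_dvd).mpr hℓq₀)
  have hν : ∀ Q lv, Q ≠ 0 → ν Q lv = ∑ n₁ ∈ Q.divisors, ∑ n₂ ∈ (Q / n₁).divisors,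
      s13c χ lv n₁ n₂ (Q / n₁ / n₂) := fun Q lv h => s13_nu_eq χ Q lv h
  set S : ℂ := ∑ b ∈ q₀.divisors, ∑ d ∈ (q₀ / b).divisors,
      s13K χ b d * ((ArithmeticFunction.sigma 1 (q₀ / b / d) : ℕ) : ℂ) with hSdef
  have hRHS : ν q₀ 1 = S := by
    rw [hν q₀ 1 hq₀ne, hSdef]
    exact Finset.sum_congr rfl fun b hb => Finset.sum_congr rfl fun d hd =>
      s13c_one χ b d _
  have hsplit : ∀ lv, lv = 1 ∨ lv = ℓ → ν q lv =
      (∑ i ∈ Finset.range (m + 1), ∑ j ∈ Finset.range (m - i + 1),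
        s13c χ lv (ℓ ^ i) (ℓ ^ j) (ℓ ^ (m - i - j))) * S := by
    intro lv hlv
    rw [hν q lv hqne]
    have e1 : (∑ n₁ ∈ q.divisors, ∑ n₂ ∈ (q / n₁).divisors, s13c χ lv n₁ n₂ (q / n₁ / n₂))
        = ∑ a ∈ (ℓ ^ m).divisors, ∑ c ∈ ((ℓ ^ m) / a).divisors, ∑ b ∈ q₀.divisors,
            ∑ d ∈ (q₀ / b).divisors,
            s13c χ lv (a * b) (c * d) (((ℓ ^ m) / a / c) * (q₀ / b / d)) := by
      conv_lhs => rw [hq0]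
      exact s13_split4 hpm hq₀ne hcop _
    rw [e1, Nat.sum_divisors_prime_pow hℓ, Finset.sum_mul]
    refine Finset.sum_congr rfl fun i hi => ?_
    rw [Finset.mem_range] at hi
    have him : i ≤ m := by omega
    rw [Nat.pow_div him hℓ.pos, Nat.sum_divisors_prime_pow hℓ, Finset.sum_mul]
    refine Finset.sum_congr rfl fun j hj => ?_
    rw [Finset.mem_range] at hj
    have hjm : j ≤ m - i := by omega
    rw [Nat.pow_div hjm hℓ.pos, hSdef, Finset.mul_sum]
    refine Finset.sum_congr rfl fun b hb => ?_
    rw [Finset.mul_sum]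
    refine Finset.sum_congr rfl fun d hd => ?_
    rw [Nat.mem_divisors] at hb hd
    have hbd : ¬ ℓ ∣ b := fun hc => hℓq₀ (hc.trans hb.1)
    have hdd : ¬ ℓ ∣ d := fun hc => hℓq₀ (hc.trans (hd.1.trans (Nat.div_dvd_of_dvd hb.1)))
    have hwd : ¬ ℓ ∣ (q₀ / b / d) := fun hc => hℓq₀
      (hc.trans ((Nat.div_dvd_of_dvd hd.1).trans (Nat.div_dvd_of_dvd hb.1)))
    exact s13c_split χ hℓ hbd hdd hwd lv hlv i j (m - i - j)
  have hD : (∑ i ∈ Finset.range (m + 1), ∑ j ∈ Finset.range (m - i + 1),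
        s13c χ ℓ (ℓ ^ i) (ℓ ^ j) (ℓ ^ (m - i - j)))
      - (∑ i ∈ Finset.range (m + 1), ∑ j ∈ Finset.range (m - i + 1),
        s13c χ 1 (ℓ ^ i) (ℓ ^ j) (ℓ ^ (m - i - j)))
      = -((Complex.normSq (1 - χ ((ℓ : ℕ) : ZMod q')) : ℂ)) := by
    rw [← Finset.sum_sub_distrib]
    simp only [← Finset.sum_sub_distrib]
    rw [s13_collapse m _ (fun k hk => Finset.sum_eq_zero fun j hj => by
      rw [s13c_zero_left χ hℓ hk, s13c_zero_left χ hℓ hk, sub_zero])]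
    rw [if_pos hm]
    rw [s13_collapse (m - 0) _ (fun k hk => by
      rw [s13c_zero_right χ hℓ hk, s13c_zero_right χ hℓ hk, sub_self])]
    rw [s13_collapse (m - 1) _ (fun k hk => by
      rw [s13c_zero_right χ hℓ hk, s13c_zero_right χ hℓ hk, sub_self])]
    have hns : ((Complex.normSq (1 - χ ((ℓ : ℕ) : ZMod q')) : ℝ) : ℂ)
        = (1 - χ ((ℓ : ℕ) : ZMod q')) *
          (1 - (starRingEnd ℂ) (χ ((ℓ : ℕ) : ZMod q'))) := by
      rw [← Complex.mul_conj]
      simp [map_sub, map_one]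
    rw [if_pos (by omega : 1 ≤ m - 0)]
    rcases Nat.lt_or_ge m 2 with h2 | h2
    · have hm1 : m = 1 := by omega
      subst hm1
      simp only [Nat.sub_zero, Nat.sub_self]
      rw [if_neg (by omega : ¬ (1:ℕ) ≤ 0), add_zero]
      rw [s13_delta χ hℓ (ℓ ^ 0) (ℓ ^ 0) 1 (Or.inl le_rfl),
        s13_delta χ hℓ (ℓ ^ 0) (ℓ ^ 1) 0 (Or.inr (by rw [pow_one])),
        s13_delta0' χ hℓ (ℓ ^ 1) (ℓ ^ 0) (by rw [pow_zero]; exact hℓ.not_dvd_one),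
        s13K_eval00 χ ℓ, s13K_eval01 χ hℓ, s13K_eval10 χ hℓ, hns]
      ring
    · rw [if_pos (by omega : 1 ≤ m - 1)]
      rw [s13_delta χ hℓ (ℓ ^ 0) (ℓ ^ 0) (m - 0 - 0) (Or.inl (by omega)),
        s13_delta χ hℓ (ℓ ^ 0) (ℓ ^ 1) (m - 0 - 1) (Or.inr (by rw [pow_one])),
        s13_delta χ hℓ (ℓ ^ 1) (ℓ ^ 0) (m - 1 - 0) (Or.inl (by omega)),
        s13_delta χ hℓ (ℓ ^ 1) (ℓ ^ 1) (m - 1 - 1) (Or.inr (by rw [pow_one])),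
        s13K_eval00 χ ℓ, s13K_eval01 χ hℓ, s13K_eval10 χ hℓ, s13K_eval11 χ hℓ, hns]
      ring
  rw [hsplit ℓ (Or.inr rfl), hsplit 1 (Or.inl rfl), hRHS, ← sub_mul, hD]
end
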